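/- Let E be a self-adjoint, positive, unital operator on the real Hilbert space of Hermitian operators on a finite-dimensional complex Hilbert space (with trace inner product) that moreover satisfies Tr[A E(A)] = ∫ f_A² ρ dμ ≥ 0 where f_A(x) = Tr[A Π(x)] with Π(x) rank-one projectors and ρ > 0. Then all eigenvalues of E lie in the interval (0,1], and 1 is an eigenvalue with eigenvector the identity operator. -/

import Mathlib

open Matrix MeasureTheory

attribute [local instance] Matrix.normedAddCommGroup Matrix.normedSpace

/-- The Berezin–Toeplitz quantum channel
`E(A) = ∫_X Tr[A Π(x)] Π(x) ρ(x) dμ(x)`. -/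
noncomputable def Ecal {n : ℕ} {X : Type*} [MeasurableSpace X] (μ : Measure X)
    (ρ : X → ℝ) (P : X → Matrix (Fin n) (Fin n) ℂ)
    (A : Matrix (Fin n) (Fin n) ℂ) : Matrix (Fin n) (Fin n) ℂ :=
  ∫ x, (A * P x).trace • ρ x • P x ∂μ

/-!
Testing the eigenvalue equation `E(A) = c A` against `A` gives
`c Tr[A²] = Tr[A E(A)] = ∫ ρ Tr[A Π]² dμ ≥ 0`. Since `Π(x)` is positive with trace one,
Cauchy–Schwarz gives `Tr[A Π]² ≤ Tr[A² Π]`, and integrating this against the resolution of the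
identity `∫ ρ Π dμ = 1` bounds the same integral by `Tr[A²] > 0`. Hence `0 ≤ c ≤ 1`, and injectivity
excludes `c = 0`. A rank-one idempotent has trace one, so `E(1) = ∫ ρ Π dμ = 1`.
-/

open ComplexOrder

namespace Matrix

theorem trace_eq_rank_of_isIdempotentElem {n K : Type*} [Fintype n] [DecidableEq n] [Field K]
    {Q : Matrix n n K} (hQ : IsIdempotentElem Q) : Q.trace = Q.rank := by
  have hQ' : IsIdempotentElem (toLin' Q) := hQ.map toLinAlgEquiv'
  rw [← trace_toLin'_eq, (LinearMap.IsIdempotentElem.isProj_range _ hQ').trace]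
  rfl

variable {n : Type*} [Fintype n]

theorem posSemidef_of_isHermitian_of_isIdempotentElem {Q : Matrix n n ℂ} (hH : Q.IsHermitian)
    (hQ : IsIdempotentElem Q) : Q.PosSemidef := by
  have hQ' : Q = Qᴴ * Q := by rw [hH.eq, hQ.eq]
  exact hQ' ▸ posSemidef_conjTranspose_mul_self Q

theorem IsHermitian.im_trace_mul {A B : Matrix n n ℂ} (hA : A.IsHermitian) (hB : B.IsHermitian) :
    (A * B).trace.im = 0 := by
  refine Complex.conj_eq_iff_im.mp ((trace_conjTranspose _).symm.trans ?_)
  rw [conjTranspose_mul, hA.eq, hB.eq, trace_mul_comm]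

theorem IsHermitian.re_trace_mul_self_pos {A : Matrix n n ℂ} (hA : A.IsHermitian) (h0 : A ≠ 0) :
    0 < (A * A).trace.re := by
  have hpos : 0 < (Aᴴ * A).trace :=
    (posSemidef_conjTranspose_mul_self A).trace_nonneg.lt_of_ne'
      (trace_conjTranspose_mul_self_eq_zero_iff.not.2 h0)
  rw [hA.eq] at hpos
  exact (Complex.pos_iff.1 hpos).1

variable [DecidableEq n]

/-- Cauchy–Schwarz for the semi-inner product `⟪X, Y⟫ = Tr[Y Q Xᴴ]` induced by `Q`, applied to `A`
and `1`. -/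
theorem norm_trace_mul_le_of_posSemidef {Q : Matrix n n ℂ} (hQ : Q.PosSemidef)
    (A : Matrix n n ℂ) :
    ‖(Q * Aᴴ).trace‖ * ‖(A * Q).trace‖ ≤ (A * Q * Aᴴ).trace.re * Q.trace.re := by
  let _ := Q.toMatrixSeminormedAddCommGroup hQ
  let _ := Q.toMatrixInnerProductSpace hQ
  have h := inner_mul_inner_self_le (𝕜 := ℂ) A 1
  change ‖(1 * Q * Aᴴ).trace‖ * ‖(A * Q * 1ᴴ).trace‖
    ≤ (A * Q * Aᴴ).trace.re * (1 * Q * 1ᴴ).trace.re at h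
  simpa only [one_mul, mul_one, conjTranspose_one] using h

theorem sq_re_trace_mul_le {Q A : Matrix n n ℂ} (hQ : Q.PosSemidef) (htr : Q.trace = 1)
    (hA : A.IsHermitian) : (A * Q).trace.re ^ 2 ≤ (A * A * Q).trace.re := by
  have h := norm_trace_mul_le_of_posSemidef hQ A
  rw [hA.eq, trace_mul_comm Q, trace_mul_cycle, htr, Complex.one_re, mul_one, ← sq] at h
  calc (A * Q).trace.re ^ 2 = |(A * Q).trace.re| ^ 2 := (sq_abs _).symm
    _ ≤ ‖(A * Q).trace‖ ^ 2 := pow_le_pow_left₀ (abs_nonneg _) (Complex.abs_re_le_norm _) 2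
    _ ≤ (A * A * Q).trace.re := h

variable {X : Type*} [MeasurableSpace X] {μ : Measure X}

noncomputable def reTraceMulLeft (M : Matrix n n ℂ) : Matrix n n ℂ →L[ℝ] ℝ :=
  LinearMap.toContinuousLinearMap
    (Complex.reLm ∘ₗ traceLinearMap n ℝ ℂ ∘ₗ LinearMap.mulLeft ℝ M)

-- Integrability is stated for the norm topology, as in the main theorem: instance search finds the
-- product topology instead, which is equal to it but not reducibly so.
theorem _root_.MeasureTheory.Integrable.re_trace_mul {F : X → Matrix n n ℂ}
    (hF : @Integrable _ PseudoMetricSpace.toUniformSpace.toTopologicalSpace _ _ _ F μ)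
    (M : Matrix n n ℂ) : Integrable (fun x => (M * F x).trace.re) μ :=
  (reTraceMulLeft M).integrable_comp hF

theorem integral_re_trace_mul {F : X → Matrix n n ℂ}
    (hF : @Integrable _ PseudoMetricSpace.toUniformSpace.toTopologicalSpace _ _ _ F μ)
    (M : Matrix n n ℂ) :
    ∫ x, (M * F x).trace.re ∂μ = (M * ∫ x, F x ∂μ).trace.re :=
  (reTraceMulLeft M).integral_comp_comm hF

end Matrix

section Ecal

variable {n : ℕ} {X : Type*} [MeasurableSpace X] {μ : Measure X} {ρ : X → ℝ}
  {P : X → Matrix (Fin n) (Fin n) ℂ}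

theorem Ecal_one (htr : ∀ x, (P x).trace = 1) (hres : ∫ x, ρ x • P x ∂μ = 1) :
    Ecal μ ρ P 1 = 1 := by
  simpa only [Ecal, one_mul, htr, one_smul] using hres

theorem re_trace_mul_Ecal_self {A : Matrix (Fin n) (Fin n) ℂ} (hA : A.IsHermitian)
    (hP : ∀ x, (P x).IsHermitian)
    (hint : @Integrable _ PseudoMetricSpace.toUniformSpace.toTopologicalSpace _ _ _
      (fun x => (A * P x).trace • ρ x • P x) μ) :
    (A * Ecal μ ρ P A).trace.re = ∫ x, ρ x * (A * P x).trace.re ^ 2 ∂μ := by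
  rw [Ecal, ← integral_re_trace_mul hint]
  refine integral_congr_ae (Filter.Eventually.of_forall fun x => ?_)
  have him := hA.im_trace_mul (hP x)
  simp only [Matrix.mul_smul, trace_smul, smul_eq_mul, Complex.real_smul, Complex.mul_re,
    Complex.ofReal_re, Complex.ofReal_im, him]
  ring

theorem re_trace_mul_Ecal_self_le {A : Matrix (Fin n) (Fin n) ℂ} (hA : A.IsHermitian)
    (hρ : ∀ x, 0 ≤ ρ x) (hP : ∀ x, (P x).PosSemidef) (htr : ∀ x, (P x).trace = 1)
    (hint : @Integrable _ PseudoMetricSpace.toUniformSpace.toTopologicalSpace _ _ _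
      (fun x => ρ x • P x) μ)
    (hres : ∫ x, ρ x • P x ∂μ = 1) :
    ∫ x, ρ x * (A * P x).trace.re ^ 2 ∂μ ≤ (A * A).trace.re :=
  calc ∫ x, ρ x * (A * P x).trace.re ^ 2 ∂μ ≤ ∫ x, (A * A * (ρ x • P x)).trace.re ∂μ := by
        refine integral_mono_of_nonneg
          (Filter.Eventually.of_forall fun x => mul_nonneg (hρ x) (sq_nonneg _))
          (hint.re_trace_mul _) (Filter.Eventually.of_forall fun x => ?_)
        dsimp only
        rw [Matrix.mul_smul, trace_smul, Complex.smul_re, smul_eq_mul]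
        exact mul_le_mul_of_nonneg_left (sq_re_trace_mul_le (hP x) (htr x) hA) (hρ x)
    _ = (A * A).trace.re := by rw [integral_re_trace_mul hint, hres, mul_one]

end Ecal

theorem stmt4_general {n : ℕ} {X : Type*} [MeasurableSpace X] (μ : Measure X)
    (ρ : X → ℝ) (hρ : ∀ x, 0 < ρ x)
    (P : X → Matrix (Fin n) (Fin n) ℂ)
    (hHerm : ∀ x, (P x).IsHermitian)
    (hidem : ∀ x, P x * P x = P x)
    (hrank : ∀ x, (P x).rank = 1)
    (hint : ∀ A : Matrix (Fin n) (Fin n) ℂ,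
      @Integrable _ PseudoMetricSpace.toUniformSpace.toTopologicalSpace _ _ _ (fun x => (A * P x).trace • ρ x • P x) μ)
    (hint0 : @Integrable _ PseudoMetricSpace.toUniformSpace.toTopologicalSpace _ _ _ (fun x => ρ x • P x) μ)
    (hres : ∫ x, ρ x • P x ∂μ = (1 : Matrix (Fin n) (Fin n) ℂ))
    (hinj : ∀ A : Matrix (Fin n) (Fin n) ℂ, A.IsHermitian → Ecal μ ρ P A = 0 → A = 0) :
    Ecal μ ρ P 1 = 1 ∧
    ∀ (c : ℝ) (A : Matrix (Fin n) (Fin n) ℂ), A.IsHermitian → A ≠ 0 →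
      Ecal μ ρ P A = (c : ℂ) • A → 0 < c ∧ c ≤ 1 := by
  have htr x : (P x).trace = 1 := by
    rw [trace_eq_rank_of_isIdempotentElem (hidem x), hrank x, Nat.cast_one]
  have hPSD x : (P x).PosSemidef :=
    posSemidef_of_isHermitian_of_isIdempotentElem (hHerm x) (hidem x)
  refine ⟨Ecal_one htr hres, fun c A hA hA0 hEig => ?_⟩
  have hS := hA.re_trace_mul_self_pos hA0
  have hquad : c * (A * A).trace.re = ∫ x, ρ x * (A * P x).trace.re ^ 2 ∂μ := by
    rw [← re_trace_mul_Ecal_self hA hHerm (hint A), hEig, Matrix.mul_smul, trace_smul,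
      smul_eq_mul, Complex.re_ofReal_mul]
  have hnonneg : 0 ≤ c * (A * A).trace.re :=
    hquad ▸ integral_nonneg fun x => mul_nonneg (hρ x).le (sq_nonneg _)
  have hle : c * (A * A).trace.re ≤ (A * A).trace.re :=
    hquad ▸ re_trace_mul_Ecal_self_le hA (fun x => (hρ x).le) hPSD htr hint0 hres
  have hc0 : c ≠ 0 := by
    rintro rfl
    exact hA0 (hinj A hA (by rw [hEig, Complex.ofReal_zero, zero_smul]))
  exact ⟨(nonneg_of_mul_nonneg_left hnonneg hS).lt_of_ne' hc0,
    (mul_le_iff_le_one_left hS).1 hle⟩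

/-- For the (injective) Berezin–Toeplitz quantum channel associated to a family of
rank-one orthogonal projectors with positive density satisfying the resolution of
identity: every eigenvalue of `E` on Hermitian matrices lies in `(0,1]`, and `1` is
an eigenvalue with eigenvector the identity. -/
theorem stmt4 {n : ℕ} {X : Type*} [MeasurableSpace X] (μ : Measure X)
    [IsFiniteMeasure μ]
    (ρ : X → ℝ) (hρ : ∀ x, 0 < ρ x)
    (P : X → Matrix (Fin n) (Fin n) ℂ)
    (hHerm : ∀ x, (P x).IsHermitian)
    (hidem : ∀ x, P x * P x = P x)
    (hrank : ∀ x, (P x).rank = 1)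
    (hint : ∀ A : Matrix (Fin n) (Fin n) ℂ,
      @Integrable _ PseudoMetricSpace.toUniformSpace.toTopologicalSpace _ _ _ (fun x => (A * P x).trace • ρ x • P x) μ)
    (hint0 : @Integrable _ PseudoMetricSpace.toUniformSpace.toTopologicalSpace _ _ _ (fun x => ρ x • P x) μ)
    (hres : ∫ x, ρ x • P x ∂μ = (1 : Matrix (Fin n) (Fin n) ℂ))
    (hinj : ∀ A : Matrix (Fin n) (Fin n) ℂ, A.IsHermitian → Ecal μ ρ P A = 0 → A = 0) :
    Ecal μ ρ P 1 = 1 ∧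
    ∀ (c : ℝ) (A : Matrix (Fin n) (Fin n) ℂ), A.IsHermitian → A ≠ 0 →
      Ecal μ ρ P A = (c : ℂ) • A → 0 < c ∧ c ≤ 1 :=
  stmt4_general μ ρ hρ P hHerm hidem hrank hint hint0 hres hinj
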